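/- arXiv:1310.7986 — 2 statements merged into one kernel-verified Lean document; each statement's English description precedes it below -/
import Mathlib

section
/- Let δ > 0, C > 0 and let x, s, a, ξ, H, h be real numbers with |x| < δ and |s − a| < 1. Suppose h = (2(2δ + x)/(2 + s − a) + x²)·ξ² + (δ^{1/2}/(2 + s − a))·ξ·H (with δ^{1/2} the real square root) and H² ≤ C·h. Then h ≥ (δ/(3 + C))·ξ². -/
set_option maxHeartbeats 1000000 in
/-- If `|x| < δ`, `|s − a| < 1`, `h = (2(2δ + x)/(2 + s − a) + x²)ξ² + (δ^{1/2}/(2 + s − a))ξH`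
and `H² ≤ C·h` with `C > 0`, then `h ≥ (δ/(3 + C))ξ²`. -/
theorem h_lower_bound (δ C x s a ξ H h : ℝ) (hδ : 0 < δ) (hC : 0 < C)
    (hx : |x| < δ) (hs : |s - a| < 1)
    (hh : h = (2 * (2 * δ + x) / (2 + s - a) + x ^ 2) * ξ ^ 2
      + (Real.sqrt δ / (2 + s - a)) * ξ * H)
    (hHC : H ^ 2 ≤ C * h) :
    h ≥ (δ / (3 + C)) * ξ ^ 2 := by
  have hh0 : 0 ≤ h := by nlinarith [sq_nonneg H]
  obtain ⟨hs1, hs2⟩ := abs_lt.mp hs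
  obtain ⟨hx1, hx2⟩ := abs_lt.mp hx
  set τ : ℝ := 2 + s - a with hτdef
  have hτ1 : 1 < τ := by simp only [hτdef]; linarith
  have hτ3 : τ < 3 := by simp only [hτdef]; linarith
  have hτ0 : τ ≠ 0 := by linarith
  have e1 : 2 * (2 * δ + x) / τ * τ = 2 * (2 * δ + x) := div_mul_cancel₀ _ hτ0
  have e2 : Real.sqrt δ / τ * τ = Real.sqrt δ := div_mul_cancel₀ _ hτ0
  have hτh : τ * h = (2 * (2 * δ + x) + τ * x ^ 2) * ξ ^ 2 + Real.sqrt δ * ξ * H := by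
    calc τ * h = (2 * (2 * δ + x) / τ * τ + τ * x ^ 2) * ξ ^ 2
          + (Real.sqrt δ / τ * τ) * ξ * H := by rw [hh]; ring
      _ = (2 * (2 * δ + x) + τ * x ^ 2) * ξ ^ 2 + Real.sqrt δ * ξ * H := by rw [e1, e2]
  have hsh : Real.sqrt h ^ 2 = h := Real.sq_sqrt hh0
  have hsδ : Real.sqrt δ ^ 2 = δ := Real.sq_sqrt hδ.le
  have hsC : Real.sqrt C ^ 2 = C := Real.sq_sqrt hC.le
  have hsh0 : 0 ≤ Real.sqrt h := Real.sqrt_nonneg h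
  have hsδ0 : 0 ≤ Real.sqrt δ := Real.sqrt_nonneg δ
  have hsC0 : 0 ≤ Real.sqrt C := Real.sqrt_nonneg C
  -- |H| ≤ √C √h
  have hH : |H| ≤ Real.sqrt C * Real.sqrt h := by
    have h1 : |H| ≤ Real.sqrt (C * h) := by
      rw [← Real.sqrt_sq_eq_abs]
      exact Real.sqrt_le_sqrt (by linarith)
    rwa [Real.sqrt_mul hC.le] at h1
  -- key inequality : 3h + √C √δ |ξ| √h ≥ 2δξ²
  have key : 3 * h + Real.sqrt C * Real.sqrt δ * |ξ| * Real.sqrt h ≥ 2 * δ * ξ ^ 2 := by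
    have h2 : -(|ξ| * |H|) ≤ ξ * H := by
      rw [← abs_mul]; exact neg_abs_le _
    have habs : Real.sqrt δ * -(|ξ| * |H|) ≤ Real.sqrt δ * (ξ * H) :=
      mul_le_mul_of_nonneg_left h2 hsδ0
    have h3 : |ξ| * |H| ≤ |ξ| * (Real.sqrt C * Real.sqrt h) :=
      mul_le_mul_of_nonneg_left hH (abs_nonneg ξ)
    have hcross : Real.sqrt δ * (|ξ| * |H|) ≤ Real.sqrt δ * (|ξ| * (Real.sqrt C * Real.sqrt h)) :=
      mul_le_mul_of_nonneg_left h3 hsδ0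
    have hcoef : 2 * (2 * δ + x) + τ * x ^ 2 ≥ 2 * δ := by
      nlinarith [mul_nonneg (le_of_lt (lt_trans zero_lt_one hτ1)) (sq_nonneg x)]
    have hcoef2 : (2 * (2 * δ + x) + τ * x ^ 2) * ξ ^ 2 ≥ 2 * δ * ξ ^ 2 :=
      mul_le_mul_of_nonneg_right hcoef (sq_nonneg ξ)
    have h5 : τ * h ≤ 3 * h := mul_le_mul_of_nonneg_right hτ3.le hh0
    have hτh' : τ * h ≥ 2 * δ * ξ ^ 2 + Real.sqrt δ * (ξ * H) := by
      rw [hτh]; linarith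
    linarith
  -- finish: case split on sign of 2δξ² − 3h
  rw [ge_iff_le, div_mul_eq_mul_div, div_le_iff₀ (by linarith : (0:ℝ) < 3 + C)]
  rcases le_or_gt (2 * δ * ξ ^ 2 - 3 * h) 0 with hcase | hcase
  · nlinarith [mul_nonneg hC.le hh0, mul_nonneg hδ.le (sq_nonneg ξ)]
  · have h4 : 2 * δ * ξ ^ 2 - 3 * h ≤ Real.sqrt C * Real.sqrt δ * |ξ| * Real.sqrt h := by
      linarith
    have hsq : (2 * δ * ξ ^ 2 - 3 * h) ^ 2 ≤ C * δ * ξ ^ 2 * h := by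
      have h6 := pow_le_pow_left₀ hcase.le h4 2
      calc (2 * δ * ξ ^ 2 - 3 * h) ^ 2
          ≤ (Real.sqrt C * Real.sqrt δ * |ξ| * Real.sqrt h) ^ 2 := h6
        _ = Real.sqrt C ^ 2 * Real.sqrt δ ^ 2 * |ξ| ^ 2 * Real.sqrt h ^ 2 := by ring
        _ = C * δ * ξ ^ 2 * h := by rw [hsC, hsδ, hsh, sq_abs]
    by_contra hcon
    push_neg at hcon
    have hw : 0 < δ * ξ ^ 2 - (3 + C) * h := by linarith
    nlinarith [hsq, mul_pos hw hw, mul_nonneg hh0 hw.le,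
      mul_nonneg (mul_nonneg hC.le hh0) hw.le,
      mul_nonneg (mul_nonneg hC.le hC.le) (mul_nonneg hh0 hh0),
      mul_nonneg hC.le (mul_nonneg hh0 hh0), mul_nonneg hh0 hh0]
end

section
/- Let n ≥ 1, let s₀ < 0 be a real number, let Ω be a set of unit vectors in ℝⁿ (Euclidean space), and let f : ℝⁿ → ℝ be a function. Suppose that for every point z in the topological support of f, every ω ∈ Ω, and every real r > −s₀ one has ‖z − r·ω‖ ≥ r + s₀. Then f(z) = 0 for every z ∈ ℝⁿ for which there exists ω ∈ Ω with ⟨z, ω⟩ > −s₀. -/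
open RealInnerProductSpace

/-- Let `s₀ < 0`, `Ω` a set of unit vectors in `ℝⁿ`, and `f : ℝⁿ → ℝ`.  If every point `z`
of the topological support of `f` satisfies `‖z − r·ω‖ ≥ r + s₀` for all `ω ∈ Ω` and
`r > −s₀`, then `f(z) = 0` whenever `⟪z, ω⟫ > −s₀` for some `ω ∈ Ω`. -/
theorem support_theorem_euclidean (n : ℕ) (hn : 1 ≤ n) (s₀ : ℝ) (hs₀ : s₀ < 0)
    (Ω : Set (EuclideanSpace ℝ (Fin n))) (hΩ : ∀ ω ∈ Ω, ‖ω‖ = 1)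
    (f : EuclideanSpace ℝ (Fin n) → ℝ)
    (h : ∀ z ∈ tsupport f, ∀ ω ∈ Ω, ∀ r : ℝ, r > -s₀ → ‖z - r • ω‖ ≥ r + s₀) :
    ∀ z : EuclideanSpace ℝ (Fin n), (∃ ω ∈ Ω, ⟪z, ω⟫ > -s₀) → f z = 0 := by
  rintro z ⟨ω, hω, hip⟩
  apply image_eq_zero_of_notMem_tsupport
  intro hz
  set c : ℝ := ⟪z, ω⟫ + s₀ with hc
  have hcpos : 0 < c := by simp only [hc]; linarith
  set r : ℝ := max (-s₀ + 1) ((‖z‖ ^ 2 - s₀ ^ 2) / (2 * c) + 1) with hr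
  have hr1 : -s₀ + 1 ≤ r := le_max_left _ _
  have hr2 : (‖z‖ ^ 2 - s₀ ^ 2) / (2 * c) + 1 ≤ r := le_max_right _ _
  have hrgt : r > -s₀ := by linarith
  have hbound := h z hz ω hω r hrgt
  have hnn : 0 ≤ r + s₀ := by linarith
  have hsq : (r + s₀) ^ 2 ≤ ‖z - r • ω‖ ^ 2 := by
    have := sq_le_sq' (by linarith [norm_nonneg (z - r • ω)]) hbound
    linarith [this]
  have hexp : ‖z - r • ω‖ ^ 2 = ‖z‖ ^ 2 - 2 * (r * ⟪z, ω⟫) + r ^ 2 := by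
    rw [@norm_sub_sq_real, real_inner_smul_right, norm_smul]
    have : |r| = r := abs_of_pos (by linarith)
    simp [this, hΩ ω hω]
  have key : 2 * r * c ≤ ‖z‖ ^ 2 - s₀ ^ 2 := by
    rw [hexp] at hsq
    nlinarith [hsq]
  have : (‖z‖ ^ 2 - s₀ ^ 2) / (2 * c) < r := by linarith
  rw [div_lt_iff₀ (by linarith)] at this
  linarith
end
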